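/- arXiv:2202.02999 — 3 statements merged into one kernel-verified Lean document; each statement's English description precedes it below -/
import Mathlib

section
/- The six-vertex constraint function f* defined on {0,1}^4 by f*(0011)=1, f*(0110)=f*(1001)=b with b≠0, and f*(x)=0 otherwise, is not windable. That is, there do not exist nonnegative values B(x,y,M) for all x,y ∈ {0,1}^4 and all M in the set M_{x⊕y} of partitions of {i : (x⊕y)_i = 1} into pairs and at most one singleton, satisfying (i) f*(x)·f*(y) = Σ_{M ∈ M_{x⊕y}} B(x,y,M) for all x,y, and (ii) B(x,y,M) = B(x⊕S, y⊕S, M) for all x,y and all S ∈ M ∈ M_{x⊕y}. -/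
open scoped Classical

/-- Flip the coordinates of `x` indexed by `S`. -/
def flipS (x : Fin 4 → Bool) (S : Finset (Fin 4)) : Fin 4 → Bool :=
  fun i => if i ∈ S then !(x i) else x i

/-- Coordinatewise XOR `x ⊕ y`. -/
def xorConf (x y : Fin 4 → Bool) : Fin 4 → Bool := fun i => xor (x i) (y i)

/-- `M ∈ 𝓜_z`: `M` is a partition of the support `{i : z i = 1}` into pairs and at
most one singleton. -/
def IsPairing (z : Fin 4 → Bool) (M : Finset (Finset (Fin 4))) : Prop :=
  (∀ S ∈ M, S.card = 2 ∨ S.card = 1) ∧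
  (M.filter (fun S => S.card = 1)).card ≤ 1 ∧
  (∀ S ∈ M, ∀ T ∈ M, S ≠ T → Disjoint S T) ∧
  (∀ i : Fin 4, z i = true ↔ ∃ S ∈ M, i ∈ S)

/-- The six-vertex constraint function `f*` with `f*(0011)=1`, `f*(0110)=f*(1001)=b`
and `f* = 0` elsewhere. -/
def fstar (b : ℚ) : (Fin 4 → Bool) → ℚ := fun x =>
  if x = ![false, false, true, true] then 1
  else if x = ![false, true, true, false] then b
  else if x = ![true, false, false, true] then b
  else 0

def xa : Fin 4 → Bool := ![false, true, true, false]
def xb : Fin 4 → Bool := ![true, false, false, true]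

lemma xor_flip (x y : Fin 4 → Bool) (S : Finset (Fin 4)) :
    xorConf (flipS x S) (flipS y S) = xorConf x y := by
  funext i
  simp only [xorConf, flipS]
  by_cases h : i ∈ S <;> simp [h]

lemma key_claim : ∀ S : Finset (Fin 4), (S.card = 2 ∨ S.card = 1) →
    ((flipS xa S ≠ ![false, false, true, true] ∧
      flipS xa S ≠ ![false, true, true, false] ∧
      flipS xa S ≠ ![true, false, false, true]) ∨
     (flipS xb S ≠ ![false, false, true, true] ∧
      flipS xb S ≠ ![false, true, true, false] ∧
      flipS xb S ≠ ![true, false, false, true])) := by decide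

/-- The constraint function `f*` with `b ≠ 0` is not windable. -/
theorem stmt0 (b : ℚ) (hb : b ≠ 0) :
    ¬ ∃ B : (Fin 4 → Bool) → (Fin 4 → Bool) → Finset (Finset (Fin 4)) → ℚ,
      (∀ x y M, IsPairing (xorConf x y) M → 0 ≤ B x y M) ∧
      (∀ x y : Fin 4 → Bool,
        fstar b x * fstar b y =
          ∑ M ∈ Finset.univ.filter (fun M => IsPairing (xorConf x y) M), B x y M) ∧
      (∀ x y M, IsPairing (xorConf x y) M → ∀ S ∈ M,
        B x y M = B (flipS x S) (flipS y S) M) := by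
  rintro ⟨B, hpos, hsum, hflip⟩
  have hzero : ∀ M, IsPairing (xorConf xa xb) M → B xa xb M = 0 := by
    intro M hM
    have h0 : xorConf xa xb 0 = true := by decide
    obtain ⟨S, hSM, -⟩ := (hM.2.2.2 0).mp h0
    have hprod : fstar b (flipS xa S) * fstar b (flipS xb S) = 0 := by
      rcases key_claim S (hM.1 S hSM) with ⟨h1, h2, h3⟩ | ⟨h1, h2, h3⟩
      · have : fstar b (flipS xa S) = 0 := by simp [fstar, h1, h2, h3]
        rw [this, zero_mul]
      · have : fstar b (flipS xb S) = 0 := by simp [fstar, h1, h2, h3]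
        rw [this, mul_zero]
    have hx' := hsum (flipS xa S) (flipS xb S)
    rw [hprod] at hx'
    have hM' : IsPairing (xorConf (flipS xa S) (flipS xb S)) M := by
      rw [xor_flip]; exact hM
    have hmem : M ∈ Finset.univ.filter
        (fun M => IsPairing (xorConf (flipS xa S) (flipS xb S)) M) :=
      Finset.mem_filter.mpr ⟨Finset.mem_univ _, hM'⟩
    have hall := (Finset.sum_eq_zero_iff_of_nonneg
      (fun M' hM'' => hpos _ _ _ ((Finset.mem_filter.mp hM'').2))).mp hx'.symm
    have hB' : B (flipS xa S) (flipS xb S) M = 0 := hall M hmem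
    rw [hflip xa xb M hM S hSM, hB']
  have hmain : fstar b xa * fstar b xb = 0 := by
    rw [hsum xa xb]
    exact Finset.sum_eq_zero (fun M hM => hzero M (Finset.mem_filter.mp hM).2)
  have ea : fstar b xa = b := by
    rw [fstar]; rw [if_neg (by decide), if_pos (by decide : xa = ![false, true, true, false])]
  have eb : fstar b xb = b := by
    rw [fstar]; rw [if_neg (by decide), if_neg (by decide), if_pos (by decide : xb = ![true, false, false, true])]
  rw [ea, eb, mul_self_eq_zero] at hmain
  exact hb hmain
end

section
/- For the windability obstruction with x = 0110 and y = 1001: if B(x,y,M) ≥ 0 satisfy the windability conditions for f*, then B(0110,1001,M₁) = B(1010,0101,M₁), where M₁ = {(x₁,x₂),(x₃,x₄)} and the flip set S = {x₁,x₂}. Since f*(1010)·f*(0101) = 0 and all B values are nonnegative, B(0110,1001,M₁) = 0. -/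
open scoped Classical

/-- The matching `M₁ = {(x₁,x₂),(x₃,x₄)}` of `{1,2,3,4}`. -/
def M1 : Finset (Finset (Fin 4)) := {({0, 1} : Finset (Fin 4)), ({2, 3} : Finset (Fin 4))}

theorem isPairing_M1 : IsPairing (fun _ => true) M1 := by
  refine ⟨?_, ?_, ?_, ?_⟩ <;> decide

theorem eq_zero_of_mul_eq_zero_of_isPairing (f : (Fin 4 → Bool) → ℚ)
    (B : (Fin 4 → Bool) → (Fin 4 → Bool) → Finset (Finset (Fin 4)) → ℚ)
    {x y : Fin 4 → Bool} {M : Finset (Finset (Fin 4))}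
    (hBnn : ∀ M, IsPairing (xorConf x y) M → 0 ≤ B x y M)
    (hBsum : f x * f y =
      ∑ M ∈ Finset.univ.filter (fun M => IsPairing (xorConf x y) M), B x y M)
    (hf : f x * f y = 0) (hM : IsPairing (xorConf x y) M) : B x y M = 0 := by
  rw [hf, eq_comm,
    Finset.sum_eq_zero_iff_of_nonneg fun M hM' => hBnn M (Finset.mem_filter.mp hM').2] at hBsum
  exact hBsum M (Finset.mem_filter.mpr ⟨Finset.mem_univ M, hM⟩)

theorem fstar_1010_eq_zero (b : ℚ) : fstar b ![true, false, true, false] = 0 := by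
  simp [fstar, funext_iff, Fin.forall_fin_succ]

theorem stmt1_general (b : ℚ)
    (B : (Fin 4 → Bool) → (Fin 4 → Bool) → Finset (Finset (Fin 4)) → ℚ)
    (hBnn : ∀ x y M, IsPairing (xorConf x y) M → 0 ≤ B x y M)
    (hBsum : ∀ x y : Fin 4 → Bool,
      fstar b x * fstar b y =
        ∑ M ∈ Finset.univ.filter (fun M => IsPairing (xorConf x y) M), B x y M)
    (hBflip : ∀ x y M, IsPairing (xorConf x y) M → ∀ S ∈ M,
      B x y M = B (flipS x S) (flipS y S) M) :
    B ![false, true, true, false] ![true, false, false, true] M1 =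
        B ![true, false, true, false] ![false, true, false, true] M1 ∧
      B ![false, true, true, false] ![true, false, false, true] M1 = 0 := by
  have hpair : IsPairing (xorConf ![false, true, true, false] ![true, false, false, true]) M1 := by
    convert isPairing_M1 using 1; decide
  have hpair' : IsPairing (xorConf ![true, false, true, false] ![false, true, false, true]) M1 := by
    convert isPairing_M1 using 1; decide
  have hflip : B ![false, true, true, false] ![true, false, false, true] M1 =
      B ![true, false, true, false] ![false, true, false, true] M1 := by
    convert hBflip _ _ M1 hpair {0, 1} (by decide) using 2 <;> decide
  refine ⟨hflip, hflip.trans ?_⟩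
  exact eq_zero_of_mul_eq_zero_of_isPairing (fstar b) B (hBnn _ _) (hBsum _ _)
    (by rw [fstar_1010_eq_zero, zero_mul]) hpair'

/-- For `x = 0110`, `y = 1001`: any `B` satisfying the windability conditions for `f*`
satisfies `B(0110,1001,M₁) = B(1010,0101,M₁)` (flip `S = {x₁,x₂}`), and hence, since
`f*(1010)·f*(0101) = 0` and all `B` values are nonnegative, `B(0110,1001,M₁) = 0`. -/
theorem stmt1 (b : ℚ) (hb : 0 < b)
    (B : (Fin 4 → Bool) → (Fin 4 → Bool) → Finset (Finset (Fin 4)) → ℚ)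
    (hBnn : ∀ x y M, IsPairing (xorConf x y) M → 0 ≤ B x y M)
    (hBsum : ∀ x y : Fin 4 → Bool,
      fstar b x * fstar b y =
        ∑ M ∈ Finset.univ.filter (fun M => IsPairing (xorConf x y) M), B x y M)
    (hBflip : ∀ x y M, IsPairing (xorConf x y) M → ∀ S ∈ M,
      B x y M = B (flipS x S) (flipS y S) M) :
    B ![false, true, true, false] ![true, false, false, true] M1 =
        B ![true, false, true, false] ![false, true, false, true] M1 ∧
      B ![false, true, true, false] ![true, false, false, true] M1 = 0 :=
  stmt1_general b B hBnn hBsum hBflip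
end

section
/- (Path coupling mixing bound.) Let Φ be an integer-valued metric on Ω×Ω taking values in {0,…,D} such that any pair σ,η ∈ Ω at distance Φ(σ,η) is connected by a path τ₀ = σ, τ₁, …, τ_k = η of adjacent states with Φ(σ,η) = Σᵢ Φ(τᵢ, τᵢ₊₁). Suppose there is β < 1 and a coupling (σ,η) ↦ (σ',η') of one step of an ergodic Markov chain on Ω such that for all adjacent pairs, E[Φ(σ',η')] ≤ β·Φ(σ,η). Then the mixing time satisfies τ(ε) ≤ log(D ε⁻¹)/(1 − β). -/
/-!
Gluing the contracting couplings of adjacent states along the paths of `hpath` (the gluing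
lemma, with the triangle inequality for `Φ`) gives a coupling of one step from any pair `σ, η`
with expected distance at most `max β 0 * Φ σ η`. Running these couplings as a Markov chain on
pairs for `t` steps contracts `Φ` by `(max β 0) ^ t ≤ exp (-(1 - β) t)`. Since `Φ ≥ 1` off the
diagonal, the coupling inequality bounds the total variation distance between any two rows of
`P ^ t` by `D exp (-(1 - β) t)`, and `π` is a mixture of these rows.
-/

open Finset

def pathSumN {α : Type*} (wt : α → α → ℕ) : List α → ℕ
  | [] => 0
  | [_] => 0
  | a :: b :: l => wt a b + pathSumN wt (b :: l)

open Matrix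

lemma Matrix.pow_mulVec_le_pow_smul {ι R : Type*} [Fintype ι] [DecidableEq ι] [CommSemiring R]
    [PartialOrder R] [IsOrderedRing R] {M : Matrix ι ι R} (hM : ∀ i, 0 ≤ M i) {β : R}
    (hβ : 0 ≤ β) {f : ι → R} (h : M *ᵥ f ≤ β • f) (t : ℕ) :
    M ^ t *ᵥ f ≤ β ^ t • f := by
  induction t with
  | zero => simp
  | succ t ih =>
    calc M ^ (t + 1) *ᵥ f = M *ᵥ (M ^ t *ᵥ f) := by rw [pow_succ', mulVec_mulVec]
      _ ≤ M *ᵥ (β ^ t • f) := fun i => dotProduct_le_dotProduct_of_nonneg_left ih (hM i)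
      _ = β ^ t • (M *ᵥ f) := mulVec_smul _ _ _
      _ ≤ β ^ t • (β • f) := smul_le_smul_of_nonneg_left h (pow_nonneg hβ t)
      _ = β ^ (t + 1) • f := by rw [smul_smul, pow_succ]

lemma Matrix.vecMul_pow_eq_self {ι R : Type*} [Fintype ι] [DecidableEq ι] [Semiring R]
    {P : Matrix ι ι R} {π : ι → R} (h : π ᵥ* P = π) (t : ℕ) : π ᵥ* P ^ t = π := by
  induction t with
  | zero => simp
  | succ t ih => rw [pow_succ, ← vecMul_vecMul, ih, h]

section Coupling

variable {Ω : Type*} [Fintype Ω]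

noncomputable def tvDist (μ ν : Ω → ℝ) : ℝ :=
  (1 / 2) * ∑ x, |μ x - ν x|

structure IsCoupling (μ ν : Ω → ℝ) (K : Ω × Ω → ℝ) : Prop where
  nonneg : 0 ≤ K
  sum_right : ∀ x, ∑ y, K (x, y) = μ x
  sum_left : ∀ y, ∑ x, K (x, y) = ν y

namespace IsCoupling

variable {μ ν w : Ω → ℝ} {K K₁ K₂ : Ω × Ω → ℝ}

lemma apply_eq_zero_of_left (h : IsCoupling μ ν K) {x : Ω} (hx : μ x = 0) (y : Ω) :
    K (x, y) = 0 :=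
  (sum_eq_zero_iff_of_nonneg fun z _ => h.nonneg (x, z)).mp ((h.sum_right x).trans hx) y
    (mem_univ y)

lemma apply_eq_zero_of_right (h : IsCoupling μ ν K) {y : Ω} (hy : ν y = 0) (x : Ω) :
    K (x, y) = 0 :=
  (sum_eq_zero_iff_of_nonneg fun z _ => h.nonneg (z, y)).mp ((h.sum_left y).trans hy) x
    (mem_univ x)

-- When `w y = 0` the division is junk, but then `K₁ (x, y) = K₂ (y, z) = 0` anyway.
lemma sum_glue_right (h₁ : IsCoupling μ w K₁) (h₂ : IsCoupling w ν K₂) (x y : Ω) :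
    ∑ z, K₁ (x, y) * K₂ (y, z) / w y = K₁ (x, y) := by
  rcases eq_or_ne (w y) 0 with hy | hy
  · simp [h₁.apply_eq_zero_of_right hy]
  · rw [← sum_div, ← mul_sum, h₂.sum_right, mul_div_cancel_right₀ _ hy]

lemma sum_glue_left (h₁ : IsCoupling μ w K₁) (h₂ : IsCoupling w ν K₂) (y z : Ω) :
    ∑ x, K₁ (x, y) * K₂ (y, z) / w y = K₂ (y, z) := by
  rcases eq_or_ne (w y) 0 with hy | hy
  · simp [h₂.apply_eq_zero_of_left hy]
  · rw [← sum_div, ← sum_mul, h₁.sum_left, mul_div_cancel_left₀ _ hy]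

theorem exists_glue_dotProduct_le (h₁ : IsCoupling μ w K₁) (h₂ : IsCoupling w ν K₂)
    {d : Ω × Ω → ℝ} (htri : ∀ x y z, d (x, z) ≤ d (x, y) + d (y, z)) :
    ∃ K, IsCoupling μ ν K ∧ K ⬝ᵥ d ≤ K₁ ⬝ᵥ d + K₂ ⬝ᵥ d := by
  set T : Ω → Ω → Ω → ℝ := fun x y z => K₁ (x, y) * K₂ (y, z) / w y
  have hT : ∀ x y z, 0 ≤ T x y z := fun x y z =>
    div_nonneg (mul_nonneg (h₁.nonneg _) (h₂.nonneg _))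
      (h₁.sum_left y ▸ sum_nonneg fun x _ => h₁.nonneg (x, y))
  refine ⟨fun p => ∑ y, T p.1 y p.2, ⟨fun p => sum_nonneg fun y _ => hT _ _ _, ?_, ?_⟩, ?_⟩
  · intro x
    simp only [T]
    rw [sum_comm, ← h₁.sum_right x]
    exact sum_congr rfl fun y _ => sum_glue_right h₁ h₂ x y
  · intro z
    simp only [T]
    rw [sum_comm, ← h₂.sum_left z]
    exact sum_congr rfl fun y _ => sum_glue_left h₁ h₂ y z
  · calc (fun p => ∑ y, T p.1 y p.2) ⬝ᵥ d
        = ∑ x, ∑ y, ∑ z, T x y z * d (x, z) := by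
          simp only [dotProduct, Fintype.sum_prod_type, sum_mul]
          exact sum_congr rfl fun x _ => sum_comm
      _ ≤ ∑ x, ∑ y, ∑ z, T x y z * (d (x, y) + d (y, z)) := by
          gcongr with x _ y _ z _
          exacts [hT x y z, htri x y z]
      _ = ∑ x, ∑ y, (∑ z, T x y z) * d (x, y) + ∑ y, ∑ z, (∑ x, T x y z) * d (y, z) := by
          simp only [mul_add, sum_add_distrib, sum_mul]
          rw [sum_comm (s := univ) (t := univ) (f := fun x y => ∑ z, T x y z * d (y, z))]
          congr 1
          exact sum_congr rfl fun y _ => sum_comm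
      _ = K₁ ⬝ᵥ d + K₂ ⬝ᵥ d := by
          simp only [T, sum_glue_right h₁ h₂, sum_glue_left h₁ h₂, dotProduct,
            Fintype.sum_prod_type]

theorem tvDist_le [DecidableEq Ω] (h : IsCoupling μ ν K) :
    tvDist μ ν ≤ ∑ p : Ω × Ω, if p.1 = p.2 then 0 else K p := by
  set off : Ω × Ω → ℝ := fun p => if p.1 = p.2 then 0 else K p
  have hpair : ∀ x y, |K (x, y) - K (y, x)| ≤ off (x, y) + off (y, x) := by
    intro x y
    by_cases hxy : x = y
    · simp [off, hxy]
    · simp only [off, if_neg hxy, if_neg (Ne.symm hxy)]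
      calc |K (x, y) - K (y, x)| ≤ |K (x, y)| + |K (y, x)| := abs_sub _ _
        _ = K (x, y) + K (y, x) := by rw [abs_of_nonneg (h.nonneg _), abs_of_nonneg (h.nonneg _)]
  have hx : ∀ x, |μ x - ν x| ≤ ∑ y, (off (x, y) + off (y, x)) := fun x => by
    rw [← h.sum_right x, ← h.sum_left x, ← sum_sub_distrib]
    exact (abs_sum_le_sum_abs _ _).trans (sum_le_sum fun y _ => hpair x y)
  calc tvDist μ ν ≤ (1 / 2) * ∑ x, ∑ y, (off (x, y) + off (y, x)) := by
        unfold tvDist; gcongr with x; exact hx x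
    _ = ∑ p, off p := by
        simp only [sum_add_distrib]
        rw [sum_comm (f := fun x y => off (y, x)), ← Fintype.sum_prod_type]
        ring

theorem tvDist_le_dotProduct [DecidableEq Ω] (h : IsCoupling μ ν K) {d : Ω × Ω → ℝ}
    (hd0 : 0 ≤ d) (hd1 : ∀ x y, x ≠ y → 1 ≤ d (x, y)) : tvDist μ ν ≤ K ⬝ᵥ d := by
  refine h.tvDist_le.trans (sum_le_sum fun p _ => ?_)
  split_ifs with hp
  · exact mul_nonneg (h.nonneg p) (hd0 p)
  · exact le_mul_of_one_le_right (h.nonneg p) (hd1 p.1 p.2 hp)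

end IsCoupling

def IsMarkovCoupling (P : Matrix Ω Ω ℝ) (M : Matrix (Ω × Ω) (Ω × Ω) ℝ) : Prop :=
  ∀ p, IsCoupling (P p.1) (P p.2) (M p)

namespace IsMarkovCoupling

variable {P Q : Matrix Ω Ω ℝ} {M N : Matrix (Ω × Ω) (Ω × Ω) ℝ}

lemma one [DecidableEq Ω] : IsMarkovCoupling (1 : Matrix Ω Ω ℝ) 1 := by
  rintro ⟨a, b⟩
  refine ⟨fun q => ?_, fun x => ?_, fun y => ?_⟩
  · rw [one_apply]; split_ifs <;> norm_num
  · simp [one_apply, Prod.ext_iff, ite_and]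
  · simp [one_apply, Prod.ext_iff, ite_and]

lemma mul (hM : IsMarkovCoupling P M) (hN : IsMarkovCoupling Q N) :
    IsMarkovCoupling (P * Q) (M * N) := by
  intro p
  refine ⟨fun q => sum_nonneg fun r _ => mul_nonneg ((hM p).nonneg r) ((hN r).nonneg q),
    fun x => ?_, fun y => ?_⟩
  · simp only [mul_apply]
    rw [sum_comm]
    simp only [← mul_sum, (hN _).sum_right, Fintype.sum_prod_type, ← sum_mul, (hM p).sum_right]
  · simp only [mul_apply]
    rw [sum_comm]
    simp only [← mul_sum, (hN _).sum_left, Fintype.sum_prod_type_right, ← sum_mul,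
      (hM p).sum_left]

lemma pow [DecidableEq Ω] (hM : IsMarkovCoupling P M) (t : ℕ) :
    IsMarkovCoupling (P ^ t) (M ^ t) := by
  induction t with
  | zero => exact one
  | succ t ih => exact ih.mul hM

end IsMarkovCoupling

-- `π = π ᵥ* Q` is a mixture of the rows of `Q`, and `tvDist (Q σ)` is convex.
theorem tvDist_le_of_vecMul_eq_self {Q : Matrix Ω Ω ℝ} {π : Ω → ℝ} (hπ0 : 0 ≤ π)
    (hπ1 : ∑ η, π η = 1) (hπQ : π ᵥ* Q = π) {σ : Ω} {B : ℝ}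
    (h : ∀ η, tvDist (Q σ) (Q η) ≤ B) : tvDist (Q σ) π ≤ B := by
  have hmix : ∀ x, Q σ x - π x = ∑ η, π η * (Q σ x - Q η x) := fun x => by
    conv_lhs => rw [← hπQ]
    simp only [mul_sub, sum_sub_distrib, ← sum_mul, hπ1, one_mul, vecMul, dotProduct]
  have habs : ∀ x, |Q σ x - π x| ≤ ∑ η, π η * |Q σ x - Q η x| := fun x => by
    rw [hmix]
    refine (abs_sum_le_sum_abs _ _).trans_eq (sum_congr rfl fun η _ => ?_)
    rw [abs_mul, abs_of_nonneg (hπ0 η)]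
  calc tvDist (Q σ) π ≤ (1 / 2) * ∑ x, ∑ η, π η * |Q σ x - Q η x| :=
        mul_le_mul_of_nonneg_left (sum_le_sum fun x _ => habs x) (by norm_num)
    _ = ∑ η, π η * tvDist (Q σ) (Q η) := by
        simp only [tvDist, mul_sum]
        rw [sum_comm]
        exact sum_congr rfl fun η _ => sum_congr rfl fun x _ => by ring
    _ ≤ ∑ η, π η * B := sum_le_sum fun η _ => mul_le_mul_of_nonneg_left (h η) (hπ0 η)
    _ = B := by rw [← sum_mul, hπ1, one_mul]

end Coupling

theorem exists_isCoupling_of_chain {Ω : Type*} [Fintype Ω] {Adj : Ω → Ω → Prop}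
    {P : Matrix Ω Ω ℝ} {Φ : Ω → Ω → ℕ} {β : ℝ}
    (htri : ∀ σ ζ η, Φ σ η ≤ Φ σ ζ + Φ ζ η) (hdiag : ∀ σ, Φ σ σ = 0)
    {C : Ω → Ω → Ω × Ω → ℝ} (hC : ∀ σ η, IsCoupling (P σ) (P η) (C σ η))
    (hCdiag : ∀ σ : Ω, ∀ p : Ω × Ω, p.1 ≠ p.2 → C σ σ p = 0)
    (hcontr : ∀ σ η, Adj σ η →
      C σ η ⬝ᵥ (fun p => (Φ p.1 p.2 : ℝ)) ≤ β * (Φ σ η : ℝ)) :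
    ∀ {l : List Ω}, l.IsChain Adj → ∀ {σ η : Ω}, l.head? = some σ → l.getLast? = some η →
      ∃ K, IsCoupling (P σ) (P η) K ∧
        K ⬝ᵥ (fun p => (Φ p.1 p.2 : ℝ)) ≤ β * (pathSumN Φ l : ℝ) := by
  intro l
  induction l with
  | nil => simp
  | cons a l ih =>
    cases l with
    | nil =>
      rintro - σ η ⟨⟩ ⟨⟩
      refine ⟨C a a, hC a a, le_of_eq ?_⟩
      simp only [pathSumN, Nat.cast_zero, mul_zero]
      refine sum_eq_zero fun p _ => ?_
      by_cases hp : p.1 = p.2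
      · simp [hp, hdiag]
      · simp [hCdiag a p hp]
    | cons b l =>
      rintro hch σ η ⟨⟩ hlast
      rw [List.isChain_cons_cons] at hch
      obtain ⟨K, hK, hKd⟩ := ih hch.2 rfl (by rwa [List.getLast?_cons_cons] at hlast)
      obtain ⟨K', hK', hK'd⟩ := (hC a b).exists_glue_dotProduct_le hK
        (d := fun p => (Φ p.1 p.2 : ℝ)) fun x y z => by exact_mod_cast htri x y z
      refine ⟨K', hK', hK'd.trans ?_⟩
      simp only [pathSumN, Nat.cast_add, mul_add]
      exact add_le_add (hcontr a b hch.1) hKd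

lemma pow_mul_le_of_log_div_le {β ε D : ℝ} {t : ℕ} (hβ : β < 1) (hε : 0 < ε) (hD : 0 ≤ D)
    (ht : Real.log (D * ε⁻¹) / (1 - β) ≤ t) : max β 0 ^ t * D ≤ ε := by
  have hexp : max β 0 ^ t ≤ Real.exp (-((1 - β) * t)) := by
    calc max β 0 ^ t ≤ Real.exp (β - 1) ^ t := by
          gcongr
          exact max_le (by linarith [Real.add_one_le_exp (β - 1)]) (Real.exp_pos _).le
      _ = Real.exp (-((1 - β) * t)) := by rw [← Real.exp_nat_mul]; ring_nf
  rcases hD.eq_or_lt with rfl | hD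
  · simpa using hε.le
  have hlog : D * ε⁻¹ ≤ Real.exp ((1 - β) * t) := by
    rw [← Real.log_le_iff_le_exp (by positivity)]
    rwa [div_le_iff₀ (by linarith), mul_comm (t : ℝ)] at ht
  calc max β 0 ^ t * D ≤ Real.exp (-((1 - β) * t)) * D := by gcongr
    _ ≤ ε := by
      rw [Real.exp_neg, inv_mul_le_iff₀ (Real.exp_pos _)]
      rwa [mul_inv_le_iff₀ hε] at hlog

theorem stmt8_general {Ω : Type*} [Fintype Ω] [DecidableEq Ω]
    (Adj : Ω → Ω → Prop) (P : Matrix Ω Ω ℝ)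
    (π : Ω → ℝ) (hπ0 : ∀ σ, 0 ≤ π σ) (hπ1 : ∑ σ, π σ = 1)
    (hstat : ∀ η, ∑ σ, π σ * P σ η = π η)
    (Φ : Ω → Ω → ℕ) (D : ℕ) (hD : ∀ σ η, Φ σ η ≤ D)
    (htri : ∀ σ ζ η, Φ σ η ≤ Φ σ ζ + Φ ζ η)
    (hzero : ∀ σ η, Φ σ η = 0 ↔ σ = η)
    (hpath : ∀ σ η : Ω, ∃ l : List Ω, l.Chain' Adj ∧ l.head? = some σ ∧
      l.getLast? = some η ∧ Φ σ η = pathSumN Φ l)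
    (C : Ω → Ω → Ω × Ω → ℝ)
    (hC0 : ∀ σ η p, 0 ≤ C σ η p)
    (hCm1 : ∀ σ η σ', ∑ η', C σ η (σ', η') = P σ σ')
    (hCm2 : ∀ σ η η', ∑ σ', C σ η (σ', η') = P η η')
    (hCdiag : ∀ σ : Ω, ∀ p : Ω × Ω, p.1 ≠ p.2 → C σ σ p = 0)
    (β : ℝ) (hβ : β < 1)
    (hcontr : ∀ σ η, Adj σ η →
      ∑ p : Ω × Ω, C σ η p * (Φ p.1 p.2 : ℝ) ≤ β * (Φ σ η : ℝ)) :
    ∀ ε : ℝ, 0 < ε → ∀ σ : Ω, ∀ t : ℕ,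
      Real.log ((D : ℝ) * ε⁻¹) / (1 - β) ≤ (t : ℝ) →
      (1 / 2) * ∑ η, |(P ^ t) σ η - π η| ≤ ε := by
  intro ε hε σ t ht
  set φ : Ω × Ω → ℝ := fun p => Φ p.1 p.2
  have hcoupling : ∀ x y, ∃ K, IsCoupling (P x) (P y) K ∧ K ⬝ᵥ φ ≤ max β 0 * φ (x, y) := by
    intro x y
    obtain ⟨l, hl, hx, hy, hΦ⟩ := hpath x y
    rw [show φ (x, y) = pathSumN Φ l by simp [φ, hΦ]]
    refine exists_isCoupling_of_chain htri (fun z => (hzero z z).2 rfl)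
      (fun a b => ⟨fun p => hC0 a b p, hCm1 a b, hCm2 a b⟩) hCdiag
      (fun a b h => (hcontr a b h).trans ?_) hl hx hy
    gcongr
    exact le_max_left β 0
  choose K hK hKφ using hcoupling
  set M : Matrix (Ω × Ω) (Ω × Ω) ℝ := fun p => K p.1 p.2
  have hM : IsMarkovCoupling P M := fun p => hK p.1 p.2
  have hMt : M ^ t *ᵥ φ ≤ max β 0 ^ t • φ :=
    pow_mulVec_le_pow_smul (fun p => (hM p).nonneg) (le_max_right β 0) (fun p => hKφ p.1 p.2) t
  have hφ0 : 0 ≤ φ := fun p => Nat.cast_nonneg _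
  have hφ1 : ∀ x y, x ≠ y → 1 ≤ φ (x, y) := fun x y hxy => by
    simpa [φ, Nat.one_le_iff_ne_zero] using (hzero x y).not.2 hxy
  refine le_trans ?_ (pow_mul_le_of_log_div_le hβ hε (Nat.cast_nonneg D) ht)
  refine tvDist_le_of_vecMul_eq_self hπ0 hπ1 (vecMul_pow_eq_self (funext hstat) t) fun η => ?_
  calc tvDist ((P ^ t) σ) ((P ^ t) η)
      ≤ (M ^ t *ᵥ φ) (σ, η) := ((hM.pow t) (σ, η)).tvDist_le_dotProduct hφ0 hφ1
    _ ≤ max β 0 ^ t * φ (σ, η) := hMt (σ, η)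
    _ ≤ max β 0 ^ t * D := by gcongr; exact Nat.cast_le.2 (hD σ η)

/-- Path coupling mixing bound: if `Φ` is an integer-valued metric with values in
`{0,…,D}` along which every pair decomposes into a path of adjacent states, and there is
a coupling of one step of the chain contracting `Φ` by a factor `β < 1` on adjacent
pairs, then the total variation distance from stationarity is at most `ε` after
`log(D ε⁻¹)/(1-β)` steps. -/
theorem stmt8 {Ω : Type*} [Fintype Ω] [DecidableEq Ω] [Nonempty Ω]
    (Adj : Ω → Ω → Prop) (P : Matrix Ω Ω ℝ)
    (hP0 : ∀ σ η, 0 ≤ P σ η) (hP1 : ∀ σ, ∑ η, P σ η = 1)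
    (hirr : ∀ σ η, ∃ t : ℕ, 0 < (P ^ t) σ η)
    (haper : ∀ σ : Ω, ∀ d : ℕ, (∀ t : ℕ, 1 ≤ t → 0 < (P ^ t) σ σ → d ∣ t) → d = 1)
    (π : Ω → ℝ) (hπ0 : ∀ σ, 0 ≤ π σ) (hπ1 : ∑ σ, π σ = 1)
    (hstat : ∀ η, ∑ σ, π σ * P σ η = π η)
    (Φ : Ω → Ω → ℕ) (D : ℕ) (hD : ∀ σ η, Φ σ η ≤ D)
    (hsym : ∀ σ η, Φ σ η = Φ η σ)
    (htri : ∀ σ ζ η, Φ σ η ≤ Φ σ ζ + Φ ζ η)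
    (hzero : ∀ σ η, Φ σ η = 0 ↔ σ = η)
    (hpath : ∀ σ η : Ω, ∃ l : List Ω, l.Chain' Adj ∧ l.head? = some σ ∧
      l.getLast? = some η ∧ Φ σ η = pathSumN Φ l)
    (C : Ω → Ω → Ω × Ω → ℝ)
    (hC0 : ∀ σ η p, 0 ≤ C σ η p)
    (hCm1 : ∀ σ η σ', ∑ η', C σ η (σ', η') = P σ σ')
    (hCm2 : ∀ σ η η', ∑ σ', C σ η (σ', η') = P η η')
    (hCdiag : ∀ σ : Ω, ∀ p : Ω × Ω, p.1 ≠ p.2 → C σ σ p = 0)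
    (β : ℝ) (hβ : β < 1)
    (hcontr : ∀ σ η, Adj σ η →
      ∑ p : Ω × Ω, C σ η p * (Φ p.1 p.2 : ℝ) ≤ β * (Φ σ η : ℝ)) :
    ∀ ε : ℝ, 0 < ε → ∀ σ : Ω, ∀ t : ℕ,
      Real.log ((D : ℝ) * ε⁻¹) / (1 - β) ≤ (t : ℝ) →
      (1 / 2) * ∑ η, |(P ^ t) σ η - π η| ≤ ε :=
  stmt8_general Adj P π hπ0 hπ1 hstat Φ D hD htri hzero hpath C hC0 hCm1 hCm2 hCdiag β hβ hcontr
end
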